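/- Define c(n,k) = (2/4^k) · ∑_{j=1}^{k} (-1)^{k−j} C(2k, k−j) (2j)^{2n} for natural numbers n, k ≥ 1. Then for all n ≥ 1, the 2n-th derivative of coth at any real x with sinh(x) ≠ 0 equals ∑_{k=1}^{n} c(n,k) · cosh(x)/sinh(x)^{2k+1}. -/

import Mathlib

/-!
Put `g m = cosh / sinh ^ m`. Since `cosh ^ 2 = 1 + sinh ^ 2`, differentiating twice gives
`g (2k+1)'' = 4k² g (2k+1) + (2k+1)(2k+2) g (2k+3)`, so every even derivative of `coth = g 1` is a
combination of the `g (2k+1)`, with coefficients obeying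
`c(n+1, k+1) = 4(k+1)² c(n, k+1) + (2k+1)(2k+2) c(n, k)`. The explicit `c(n, k)` satisfy this
recurrence termwise, by `C(2k+2, d+1) (d+1) (2k+1-d) = (2k+2)(2k+1) C(2k, d)`. The combination
stops at `k = n` because `c(n, k)` is, up to a factor, the `2k`-th central difference of `x ^ (2n)`
at `0`, which vanishes for `2n < 2k`.
-/

/-- The coefficients c(n,k) as real numbers. -/
noncomputable def cCoeff (n k : ℕ) : ℝ :=
  (2 / 4 ^ k) * ∑ j ∈ Finset.Icc 1 k,
    (-1 : ℝ) ^ (k - j) * ((2 * k).choose (k - j)) * (2 * j : ℝ) ^ (2 * n)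

open Real Finset

lemma Nat.add_two_choose_add_one_mul (m d : ℕ) :
    (m + 2).choose (d + 1) * ((d + 1) * (m + 1 - d)) = (m + 2) * (m + 1) * m.choose d := by
  calc (m + 2).choose (d + 1) * ((d + 1) * (m + 1 - d))
      = (m + 2) * ((m + 1).choose d * (m + 1 - d)) := by
        rw [← mul_assoc, ← Nat.add_one_mul_choose_eq]; ring
    _ = (m + 2) * (m + 1) * m.choose d := by rw [← Nat.choose_mul_succ_eq]; ring

lemma sum_range_two_mul_add_one_of_symm {M : Type*} [AddCommMonoid M] (k : ℕ) (f : ℕ → M)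
    (hmid : f k = 0) (hsymm : ∀ t < k, f (k - 1 - t) = f (k + 1 + t)) :
    ∑ i ∈ range (2 * k + 1), f i = 2 • ∑ t ∈ range k, f (k + 1 + t) := by
  rw [show 2 * k + 1 = k + (k + 1) by ring, sum_range_add, sum_range_succ', ← sum_range_reflect,
    sum_congr rfl fun t ht => hsymm t (mem_range.mp ht), add_zero, hmid, add_zero, two_nsmul]
  simp only [add_assoc, add_comm 1]

lemma sum_Icc_neg_one_pow_mul_choose_mul_pow_eq_zero {R : Type*} [CommRing R]
    [NoZeroSMulDivisors ℕ R] {n k : ℕ} (hn : 0 < n) (hnk : n < k) :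
    ∑ j ∈ Icc 1 k, (-1 : R) ^ (k - j) * ((2 * k).choose (k - j)) * (j : R) ^ (2 * n) = 0 := by
  -- the summands of the `2k`-th forward difference of `x ↦ x ^ (2n)` at `-k`
  let f : ℕ → R := fun i =>
    ((-1 : ℤ) ^ (2 * k - i) * ((2 * k).choose i : ℤ)) • ((-k : R) + i • (1 : R)) ^ (2 * n)
  have hΔ : ∑ i ∈ range (2 * k + 1), f i = 0 := by
    have h := congrFun (fwdDiff_iter_pow_eq_zero_of_lt (R := R) (show 2 * n < 2 * k by omega))
      (-k : R)
    rwa [fwdDiff_iter_eq_sum_shift] at h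
  have hmid : f k = 0 := by simp [f, hn.ne']
  have hsymm : ∀ t < k, f (k - 1 - t) = f (k + 1 + t) := by
    intro t ht
    simp only [f]
    rw [show 2 * k - (k - 1 - t) = 2 * k - (k + 1 + t) + 2 * (t + 1) by omega, pow_add, pow_mul,
      neg_one_sq, one_pow, mul_one,
      Nat.choose_symm_of_eq_add (show 2 * k = k - 1 - t + (k + 1 + t) by omega), nsmul_one,
      nsmul_one, Nat.cast_sub (by omega), Nat.cast_sub (by omega), pow_mul, pow_mul]
    push_cast
    ring
  have hright : ∀ t ∈ range k, f (k + 1 + t) =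
      (-1 : R) ^ (k - (1 + t)) * ((2 * k).choose (k - (1 + t))) * ((1 + t : ℕ) : R) ^ (2 * n) := by
    intro t ht
    replace ht := mem_range.mp ht
    simp only [f]
    rw [zsmul_eq_mul, nsmul_one, show 2 * k - (k + 1 + t) = k - (1 + t) by omega,
      Nat.choose_symm_of_eq_add (show 2 * k = k + 1 + t + (k - (1 + t)) by omega)]
    push_cast
    ring
  rw [sum_range_two_mul_add_one_of_symm k f hmid hsymm, sum_congr rfl hright, smul_eq_zero] at hΔ
  rw [← Ico_add_one_right_eq_Icc, sum_Ico_eq_sum_range, Nat.add_sub_cancel]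
  simpa using hΔ

lemma cCoeff_zero_right (n : ℕ) : cCoeff n 0 = 0 := by
  simp [cCoeff]

lemma cCoeff_eq_zero_of_lt {n k : ℕ} (hn : 0 < n) (hnk : n < k) : cCoeff n k = 0 := by
  rw [cCoeff, mul_eq_zero]
  right
  calc ∑ j ∈ Icc 1 k, (-1 : ℝ) ^ (k - j) * ((2 * k).choose (k - j)) * (2 * j : ℝ) ^ (2 * n)
      = 2 ^ (2 * n) *
          ∑ j ∈ Icc 1 k, (-1 : ℝ) ^ (k - j) * ((2 * k).choose (k - j)) * (j : ℝ) ^ (2 * n) := by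
        rw [mul_sum]
        exact sum_congr rfl fun j _ => by ring
    _ = 0 := by rw [sum_Icc_neg_one_pow_mul_choose_mul_pow_eq_zero hn hnk, mul_zero]

lemma cCoeff_summand_succ (n k j : ℕ) (hj : j ≤ k) :
    (-1 : ℝ) ^ (k + 1 - j) * ((2 * (k + 1)).choose (k + 1 - j)) * (2 * j : ℝ) ^ (2 * (n + 1)) =
      4 * (k + 1) ^ 2 * ((-1 : ℝ) ^ (k + 1 - j) * ((2 * (k + 1)).choose (k + 1 - j)) *
        (2 * j : ℝ) ^ (2 * n)) +
      4 * (2 * k + 1) * (2 * k + 2) * ((-1 : ℝ) ^ (k - j) * ((2 * k).choose (k - j)) *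
        (2 * j : ℝ) ^ (2 * n)) := by
  obtain ⟨d, rfl⟩ := Nat.exists_eq_add_of_le hj
  have hchoose := Nat.add_two_choose_add_one_mul (2 * (j + d)) d
  rw [show 2 * (j + d) + 1 - d = 2 * j + d + 1 by omega] at hchoose
  have hchooseR : ((2 * (j + d) + 2).choose (d + 1) : ℝ) * ((d + 1) * (2 * j + d + 1)) =
      (2 * (j + d) + 2) * (2 * (j + d) + 1) * (2 * (j + d)).choose d := by
    exact_mod_cast hchoose
  rw [show j + d + 1 - j = d + 1 by omega, show j + d - j = d by omega,
    show 2 * (j + d + 1) = 2 * (j + d) + 2 by ring]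
  push_cast
  linear_combination (4 * (-1 : ℝ) ^ d * (2 * j : ℝ) ^ (2 * n)) * hchooseR

lemma cCoeff_succ_succ (n k : ℕ) :
    cCoeff (n + 1) (k + 1) =
      4 * (k + 1) ^ 2 * cCoeff n (k + 1) + (2 * k + 1) * (2 * k + 2) * cCoeff n k := by
  have hsum := sum_congr rfl fun j (hj : j ∈ Icc 1 k) =>
    cCoeff_summand_succ n k j (mem_Icc.mp hj).2
  rw [sum_add_distrib, ← mul_sum, ← mul_sum] at hsum
  simp only [cCoeff]
  rw [sum_Icc_succ_top (by omega), sum_Icc_succ_top (by omega), hsum]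
  simp only [Nat.sub_self, pow_zero, Nat.choose_zero_right]
  push_cast
  ring

lemma sum_cCoeff_mul_second_diff {n : ℕ} (hn : 0 < n) (v : ℕ → ℝ) :
    ∑ k ∈ range (n + 1), cCoeff n k * (4 * k ^ 2 * v k + (2 * k + 1) * (2 * k + 2) * v (k + 1)) =
      ∑ k ∈ range (n + 2), cCoeff (n + 1) k * v k := by
  let f : ℕ → ℝ := fun k => 4 * (k : ℝ) ^ 2 * cCoeff n k * v k
  have hshift : ∑ k ∈ range (n + 1), f (k + 1) = ∑ k ∈ range (n + 1), f k := by
    have hbot := sum_range_succ' f (n + 1)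
    have htop := sum_range_succ f (n + 1)
    simp only [f, cCoeff_eq_zero_of_lt hn n.lt_succ_self, CharP.cast_eq_zero] at hbot htop
    linarith
  calc _ = ∑ k ∈ range (n + 1), f k +
        ∑ k ∈ range (n + 1), (2 * k + 1) * (2 * k + 2) * cCoeff n k * v (k + 1) := by
        rw [← sum_add_distrib]
        exact sum_congr rfl fun k _ => by ring
    _ = ∑ k ∈ range (n + 1), cCoeff (n + 1) (k + 1) * v (k + 1) := by
        rw [← hshift, ← sum_add_distrib]
        refine sum_congr rfl fun k _ => ?_
        simp only [f, cCoeff_succ_succ]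
        push_cast
        ring
    _ = _ := by rw [sum_range_succ' _ (n + 1), cCoeff_zero_right, zero_mul, add_zero]

section Hyperbolic

variable {x : ℝ}

lemma isOpen_setOf_sinh_ne_zero : IsOpen {x : ℝ | sinh x ≠ 0} :=
  isOpen_ne_fun continuous_sinh continuous_const

lemma hasDerivAt_inv_sinh_pow (m : ℕ) (hx : sinh x ≠ 0) :
    HasDerivAt (fun y => (sinh y ^ m)⁻¹) (-m * (cosh x / sinh x ^ (m + 1))) x := by
  refine (((hasDerivAt_sinh x).fun_pow m).fun_inv (pow_ne_zero m hx)).congr_deriv ?_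
  rcases m with _ | m
  · simp
  · rw [Nat.add_sub_cancel]
    field_simp
    ring

lemma hasDerivAt_cosh_div_sinh_pow (m : ℕ) (hx : sinh x ≠ 0) :
    HasDerivAt (fun y => cosh y / sinh y ^ (m + 1))
      (-m * (sinh x ^ m)⁻¹ - (m + 1) * (sinh x ^ (m + 2))⁻¹) x := by
  refine ((hasDerivAt_cosh x).fun_div ((hasDerivAt_sinh x).fun_pow (m + 1))
    (pow_ne_zero _ hx)).congr_deriv ?_
  rw [Nat.add_sub_cancel]
  field_simp
  rw [cosh_sq]
  push_cast
  ring

lemma contDiffAt_cosh_div_sinh_pow {n : WithTop ℕ∞} (m : ℕ) (hx : sinh x ≠ 0) :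
    ContDiffAt ℝ n (fun y => cosh y / sinh y ^ m) x :=
  contDiff_cosh.contDiffAt.div (contDiff_sinh.pow m).contDiffAt (pow_ne_zero m hx)

lemma iteratedDeriv_two_cosh_div_sinh_pow (m : ℕ) (hx : sinh x ≠ 0) :
    iteratedDeriv 2 (fun y => cosh y / sinh y ^ (m + 1)) x =
      m ^ 2 * (cosh x / sinh x ^ (m + 1)) + (m + 1) * (m + 2) * (cosh x / sinh x ^ (m + 3)) := by
  have hderiv : Set.EqOn (deriv fun y => cosh y / sinh y ^ (m + 1))
      (fun y => -m * (sinh y ^ m)⁻¹ - (m + 1) * (sinh y ^ (m + 2))⁻¹) {y | sinh y ≠ 0} :=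
    fun y hy => (hasDerivAt_cosh_div_sinh_pow m hy).deriv
  rw [iteratedDeriv_succ', hderiv.iteratedDeriv_of_isOpen isOpen_setOf_sinh_ne_zero 1 hx,
    iteratedDeriv_one]
  refine (((hasDerivAt_inv_sinh_pow m hx).const_mul _).sub
    ((hasDerivAt_inv_sinh_pow (m + 2) hx).const_mul _)).deriv.trans ?_
  push_cast
  ring

lemma iteratedDeriv_two_sum_cosh_div_sinh_pow (s : Finset ℕ) (a : ℕ → ℝ) (hx : sinh x ≠ 0) :
    iteratedDeriv 2 (fun y => ∑ k ∈ s, a k * (cosh y / sinh y ^ (2 * k + 1))) x =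
      ∑ k ∈ s, a k * (4 * k ^ 2 * (cosh x / sinh x ^ (2 * k + 1))
        + (2 * k + 1) * (2 * k + 2) * (cosh x / sinh x ^ (2 * k + 3))) := by
  rw [iteratedDeriv_fun_sum fun k _ => contDiffAt_const.mul (contDiffAt_cosh_div_sinh_pow _ hx)]
  refine sum_congr rfl fun k _ => ?_
  rw [iteratedDeriv_const_mul_field, iteratedDeriv_two_cosh_div_sinh_pow (2 * k) hx]
  push_cast
  ring

end Hyperbolic

lemma eqOn_iteratedDeriv_coth {n : ℕ} (hn : 0 < n) :
    Set.EqOn (iteratedDeriv (2 * n) fun y => cosh y / sinh y)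
      (fun x => ∑ k ∈ range (n + 1), cCoeff n k * (cosh x / sinh x ^ (2 * k + 1)))
      {x | sinh x ≠ 0} := by
  induction n, hn using Nat.le_induction with
  | base =>
    intro x hx
    have hc : cCoeff 1 1 = 2 := by norm_num [cCoeff]
    simpa [sum_range_succ, cCoeff_zero_right, hc] using iteratedDeriv_two_cosh_div_sinh_pow 0 hx
  | succ n hn ih =>
    intro x hx
    rw [show 2 * (n + 1) = 2 + 2 * n by ring, iteratedDeriv_eq_iterate, Function.iterate_add_apply,
      ← iteratedDeriv_eq_iterate, ← iteratedDeriv_eq_iterate,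
      ih.iteratedDeriv_of_isOpen isOpen_setOf_sinh_ne_zero 2 hx,
      iteratedDeriv_two_sum_cosh_div_sinh_pow _ _ hx]
    exact sum_cCoeff_mul_second_diff (by omega) fun k => cosh x / sinh x ^ (2 * k + 1)

theorem stmt_10 (n : ℕ) (hn : 1 ≤ n) (x : ℝ) (hx : Real.sinh x ≠ 0) :
    iteratedDeriv (2 * n) (fun y => Real.cosh y / Real.sinh y) x
    = ∑ k ∈ Finset.Icc 1 n,
        cCoeff n k * (Real.cosh x / Real.sinh x ^ (2 * k + 1)) := by
  rw [eqOn_iteratedDeriv_coth hn hx]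
  beta_reduce
  rw [sum_range_eq_add_Ico _ n.add_one_pos, cCoeff_zero_right, zero_mul, zero_add,
    Ico_add_one_right_eq_Icc]
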